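/- Let X ⊂ ℝⁿ be a compact set, f : X → X, and x* ∈ X. Suppose V : X → ℝ≥0 satisfies V(x*) = 0 and V(x) > 0 for all x ∈ X \ {x*}, and there exists a continuous φ : X → ℝ≥0 with φ(x*) = 0, φ(x) > 0 for x ≠ x*, and V(f(x)) − V(x) ≤ −φ(x) for all x ∈ X. Then every trajectory defined by x_{t+1} = f(x_t), x_0 ∈ X, satisfies x_t → x* as t → ∞. -/
import Mathlib


/-- Attractivity of a discrete-time system on a compact set via a Lyapunov-like
function `V` decreasing by a continuous positive-definite function `φ`. -/
theorem stmt0 {n : ℕ} (X : Set (EuclideanSpace ℝ (Fin n))) (hX : IsCompact X)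
    (f : EuclideanSpace ℝ (Fin n) → EuclideanSpace ℝ (Fin n))
    (hf : ∀ x ∈ X, f x ∈ X)
    (xstar : EuclideanSpace ℝ (Fin n)) (hxstar : xstar ∈ X)
    (V φ : EuclideanSpace ℝ (Fin n) → ℝ)
    (hVnonneg : ∀ x ∈ X, 0 ≤ V x)
    (hV0 : V xstar = 0)
    (hVpos : ∀ x ∈ X, x ≠ xstar → 0 < V x)
    (hφcont : ContinuousOn φ X)
    (hφnonneg : ∀ x ∈ X, 0 ≤ φ x)
    (hφ0 : φ xstar = 0)
    (hφpos : ∀ x ∈ X, x ≠ xstar → 0 < φ x)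
    (hdec : ∀ x ∈ X, V (f x) - V x ≤ -φ x)
    (x : ℕ → EuclideanSpace ℝ (Fin n))
    (hx0 : x 0 ∈ X)
    (hstep : ∀ t : ℕ, x (t + 1) = f (x t)) :
    Filter.Tendsto x Filter.atTop (nhds xstar) := by
  have hxX : ∀ t, x t ∈ X := by
    intro t; induction t with
    | zero => exact hx0
    | succ k ih => rw [hstep]; exact hf _ ih
  have hsum' : ∀ N, ∑ t ∈ Finset.range N, φ (x t) + V (x N) ≤ V (x 0) := by
    intro N; induction N with
    | zero => simp
    | succ k ih =>
      rw [Finset.sum_range_succ]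
      have h := hdec (x k) (hxX k)
      rw [← hstep k] at h
      linarith
  have hsum : ∀ N, ∑ t ∈ Finset.range N, φ (x t) ≤ V (x 0) := by
    intro N
    have h1 := hsum' N
    have h2 := hVnonneg (x N) (hxX N)
    linarith
  have hsummable : Summable (fun t => φ (x t)) :=
    summable_of_sum_range_le (fun t => hφnonneg _ (hxX t)) hsum
  have hφto0 : Filter.Tendsto (fun t => φ (x t)) Filter.atTop (nhds 0) :=
    hsummable.tendsto_atTop_zero
  rw [Metric.tendsto_atTop]
  intro ε hε
  set K := X ∩ {y | ε ≤ dist y xstar} with hKdef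
  have hKc : IsCompact K :=
    hX.inter_right (isClosed_le continuous_const ((continuous_id.dist continuous_const)))
  by_cases hKe : K.Nonempty
  · obtain ⟨z, hzK, hzmin⟩ := hKc.exists_isMinOn hKe (hφcont.mono Set.inter_subset_left)
    have hzne : z ≠ xstar := by
      intro h
      have h2 := hzK.2
      rw [h] at h2
      simp only [Set.mem_setOf_eq, dist_self] at h2
      linarith
    have hzpos : 0 < φ z := hφpos z hzK.1 hzne
    have hev : ∀ᶠ t in Filter.atTop, φ (x t) < φ z :=
      hφto0.eventually (gt_mem_nhds hzpos)
    obtain ⟨N, hN⟩ := Filter.eventually_atTop.mp hev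
    refine ⟨N, fun t ht => ?_⟩
    by_contra hcon
    push_neg at hcon
    have hxK : x t ∈ K := ⟨hxX t, hcon⟩
    exact absurd (hzmin hxK) (not_le.mpr (hN t ht))
  · refine ⟨0, fun t _ => ?_⟩
    by_contra hcon
    push_neg at hcon
    exact hKe ⟨x t, hxX t, hcon⟩
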